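/- Let μ > 0, t > 0, p ∈ (0,1). On a probability space let θ be a random variable taking values 1 and -1 with P(θ = 1) = p, and let Z be a centered Gaussian random variable with variance t independent of θ. Set X = μθt + Z. Then, almost surely, the conditional expectation of θ given the σ-algebra generated by X equals 1 - 2(1-p)/(p·e^{2μX} + 1 - p). -/

import Mathlib

/-!
Since `θ` and `Z` are independent, `E[F(θ, Z)] = p E[F(1, Z)] + (1 - p) E[F(-1, Z)]`, so for every
Borel set `B`, with `φ±` the densities of `N(±μt, t)`,
`E[θ; X ∈ B] = ∫_B (p φ₊ - (1 - p) φ₋)` and `E[g(X); X ∈ B] = ∫_B g (p φ₊ + (1 - p) φ₋)`.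
Exponential tilting gives `φ₊(x) = e^{2μx} φ₋(x)`, and the stated `g` is exactly the ratio
`(p φ₊ - (1 - p) φ₋) / (p φ₊ + (1 - p) φ₋)`, so the two integrals agree and `g(X)` satisfies the
defining property of `E[θ | X]`.
-/

open MeasureTheory ProbabilityTheory Real

lemma gaussianPDFReal_eq_exp_mul_gaussianPDFReal_neg (m : ℝ) (v : NNReal) (x : ℝ) :
    gaussianPDFReal m v x = exp (2 * m * x / v) * gaussianPDFReal (-m) v x := by
  simp only [gaussianPDFReal]
  rw [mul_left_comm, ← exp_add]
  congr 2
  ring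

/-- `signPosteriorMean p (2 * μ) x = (p e^{2μx} - (1 - p)) / (p e^{2μx} + (1 - p))` is
`E[θ | X = x]`. -/
noncomputable def signPosteriorMean (p c x : ℝ) : ℝ :=
  1 - 2 * (1 - p) / (p * exp (c * x) + 1 - p)

section signPosteriorMean

variable {p : ℝ} (c : ℝ)

lemma measurable_signPosteriorMean : Measurable (signPosteriorMean p c) := by
  unfold signPosteriorMean; fun_prop

lemma signPosteriorMean_denom_pos (hp₀ : 0 ≤ p) (hp₁ : p ≤ 1) (x : ℝ) :
    0 < p * exp (c * x) + 1 - p := by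
  rcases hp₀.eq_or_lt with rfl | hp
  · simp
  · nlinarith [exp_pos (c * x)]

lemma mul_signPosteriorMean (hp₀ : 0 ≤ p) (hp₁ : p ≤ 1) (x : ℝ) :
    (p * exp (c * x) + 1 - p) * signPosteriorMean p c x = p * exp (c * x) - (1 - p) := by
  have := (signPosteriorMean_denom_pos c hp₀ hp₁ x).ne'
  unfold signPosteriorMean
  field_simp
  ring

lemma abs_signPosteriorMean_le_one (hp₀ : 0 ≤ p) (hp₁ : p ≤ 1) (x : ℝ) :
    |signPosteriorMean p c x| ≤ 1 := by
  have hD := signPosteriorMean_denom_pos c hp₀ hp₁ x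
  have hq : 0 ≤ 2 * (1 - p) / (p * exp (c * x) + 1 - p) := div_nonneg (by linarith) hD.le
  have hq' : 2 * (1 - p) / (p * exp (c * x) + 1 - p) ≤ 2 := by
    rw [div_le_iff₀ hD]; nlinarith [exp_pos (c * x)]
  rw [signPosteriorMean, abs_le]
  constructor <;> linarith

lemma mixture_mul_signPosteriorMean (hp₀ : 0 ≤ p) (hp₁ : p ≤ 1) {t : ℝ} (ht : 0 < t)
    (μ x : ℝ) :
    (p * gaussianPDFReal (μ * t) t.toNNReal x
        + (1 - p) * gaussianPDFReal (-(μ * t)) t.toNNReal x) * signPosteriorMean p (2 * μ) x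
      = p * gaussianPDFReal (μ * t) t.toNNReal x
        - (1 - p) * gaussianPDFReal (-(μ * t)) t.toNNReal x := by
  rw [gaussianPDFReal_eq_exp_mul_gaussianPDFReal_neg (μ * t), Real.coe_toNNReal _ ht.le,
    show 2 * (μ * t) * x / t = 2 * μ * x by field_simp]
  linear_combination
    gaussianPDFReal (-(μ * t)) t.toNNReal x * mul_signPosteriorMean (2 * μ) hp₀ hp₁ x

end signPosteriorMean

lemma preimage_neg_one_eq_compl {α : Type*} {θ : α → ℝ} (hθpm : ∀ ω, θ ω = 1 ∨ θ ω = -1) :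
    θ ⁻¹' {-1} = (θ ⁻¹' {1})ᶜ := by
  ext ω; rcases hθpm ω with h | h <;> norm_num [h]

section SignIndependentOfGaussian

variable {Ω : Type*} [MeasurableSpace Ω] {P : Measure Ω} {θ Z : Ω → ℝ}

lemma ProbabilityTheory.IndepFun.setIntegral_preimage_eq_measureReal_mul
    (hindep : IndepFun θ Z P) (hθ : Measurable θ) (hZ : AEMeasurable Z P) {S : Set ℝ}
    (hS : MeasurableSet S) {f : ℝ → ℝ} (hf : AEStronglyMeasurable f (P.map Z)) :
    ∫ ω in θ ⁻¹' S, f (Z ω) ∂P = P.real (θ ⁻¹' S) * ∫ ω, f (Z ω) ∂P := by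
  have hprod : (θ ⁻¹' S).indicator (fun ω => f (Z ω))
      = fun ω => S.indicator 1 (θ ω) * f (Z ω) := by
    ext ω; by_cases h : θ ω ∈ S <;> simp [h]
  rw [← integral_indicator (hθ hS), hprod,
    hindep.integral_fun_comp_mul_comp hθ.aemeasurable hZ
      (measurable_one.indicator hS).aestronglyMeasurable hf,
    ← integral_indicator_one (hθ hS)]
  rfl

lemma integral_const_add_eq_integral_gaussianPDFReal_mul {v : NNReal} (hv : v ≠ 0)
    (hZ : Measurable Z) (hZlaw : P.map Z = gaussianReal 0 v) (c : ℝ) {f : ℝ → ℝ}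
    (hf : Measurable f) :
    ∫ ω, f (c + Z ω) ∂P = ∫ x, gaussianPDFReal c v x * f x := by
  rw [← integral_map hZ.aemeasurable (f := fun z => f (c + z))
      (hf.comp (measurable_const_add c)).aestronglyMeasurable, hZlaw,
    ← integral_map (φ := (c + ·)) (measurable_const_add c).aemeasurable hf.aestronglyMeasurable,
    gaussianReal_map_const_add, zero_add, integral_gaussianReal_eq_integral_smul hv]
  rfl

variable [IsProbabilityMeasure P] {p : ℝ}

lemma integral_comp_eq_of_indepFun_sign (hθ : Measurable θ) (hZ : Measurable Z)
    (hθpm : ∀ ω, θ ω = 1 ∨ θ ω = -1) (hθp : P {ω | θ ω = 1} = ENNReal.ofReal p) (hp₀ : 0 ≤ p)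
    (hindep : IndepFun θ Z P) {F : ℝ → ℝ → ℝ} (hF₁ : Measurable (F 1))
    (hF₂ : Measurable (F (-1))) (hF : Integrable (fun ω => F (θ ω) (Z ω)) P) :
    ∫ ω, F (θ ω) (Z ω) ∂P = p * ∫ ω, F 1 (Z ω) ∂P + (1 - p) * ∫ ω, F (-1) (Z ω) ∂P := by
  have hA : MeasurableSet (θ ⁻¹' {1}) := hθ (measurableSet_singleton 1)
  have hPA : P.real (θ ⁻¹' {1}) = p := by
    rw [measureReal_def, show θ ⁻¹' {1} = {ω | θ ω = 1} from rfl, hθp, ENNReal.toReal_ofReal hp₀]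
  rw [← integral_add_compl hA hF, ← preimage_neg_one_eq_compl hθpm,
    setIntegral_congr_fun hA fun ω (hω : θ ω = 1) => congrArg (F · (Z ω)) hω,
    setIntegral_congr_fun (hθ (measurableSet_singleton (-1)))
      fun ω (hω : θ ω = -1) => congrArg (F · (Z ω)) hω,
    hindep.setIntegral_preimage_eq_measureReal_mul hθ hZ.aemeasurable
      (measurableSet_singleton 1) hF₁.aestronglyMeasurable,
    hindep.setIntegral_preimage_eq_measureReal_mul hθ hZ.aemeasurable
      (measurableSet_singleton (-1)) hF₂.aestronglyMeasurable,
    preimage_neg_one_eq_compl hθpm, measureReal_compl hA, hPA, probReal_univ]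

lemma integral_comp_sign_drift (hθ : Measurable θ) (hZ : Measurable Z)
    (hθpm : ∀ ω, θ ω = 1 ∨ θ ω = -1) (hθp : P {ω | θ ω = 1} = ENNReal.ofReal p) (hp₀ : 0 ≤ p)
    (hindep : IndepFun θ Z P) {v : NNReal} (hv : v ≠ 0) (hZlaw : P.map Z = gaussianReal 0 v)
    (a : ℝ) {k : ℝ → ℝ → ℝ} (hk : Measurable (Function.uncurry k)) {C : ℝ}
    (hk₁ : ∀ x, |k 1 x| ≤ C) (hk₂ : ∀ x, |k (-1) x| ≤ C) :
    ∫ ω, k (θ ω) (a * θ ω + Z ω) ∂P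
      = ∫ x, (p * (gaussianPDFReal a v x * k 1 x)
          + (1 - p) * (gaussianPDFReal (-a) v x * k (-1) x)) := by
  have hk₁m : Measurable (k 1) := hk.comp (measurable_const.prodMk measurable_id)
  have hk₂m : Measurable (k (-1)) := hk.comp (measurable_const.prodMk measurable_id)
  have hint : Integrable (fun ω => k (θ ω) (a * θ ω + Z ω)) P := by
    refine .of_bound (hk.comp (hθ.prodMk (by fun_prop))).aestronglyMeasurable C
      (ae_of_all _ fun ω => ?_)
    rcases hθpm ω with h | h <;> simp only [h, norm_eq_abs, hk₁, hk₂]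
  have hpdf_mul (c : ℝ) {f : ℝ → ℝ} (hf : Measurable f) (hb : ∀ x, |f x| ≤ C) :
      Integrable (fun x => gaussianPDFReal c v x * f x) :=
    (integrable_gaussianPDFReal c v).mul_bdd hf.aestronglyMeasurable (ae_of_all _ hb)
  rw [integral_comp_eq_of_indepFun_sign (F := fun s z => k s (a * s + z)) hθ hZ hθpm hθp hp₀
    hindep (by fun_prop) (by fun_prop) hint]
  simp only [mul_one, mul_neg_one]
  rw [integral_const_add_eq_integral_gaussianPDFReal_mul hv hZ hZlaw a hk₁m,
    integral_const_add_eq_integral_gaussianPDFReal_mul hv hZ hZlaw (-a) hk₂m,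
    integral_add ((hpdf_mul a hk₁m hk₁).const_mul p)
      ((hpdf_mul (-a) hk₂m hk₂).const_mul (1 - p)),
    integral_const_mul, integral_const_mul]

lemma setIntegral_preimage_sign_drift (hθ : Measurable θ) (hZ : Measurable Z)
    (hθpm : ∀ ω, θ ω = 1 ∨ θ ω = -1) (hθp : P {ω | θ ω = 1} = ENNReal.ofReal p) (hp₀ : 0 ≤ p)
    (hindep : IndepFun θ Z P) {v : NNReal} (hv : v ≠ 0) (hZlaw : P.map Z = gaussianReal 0 v)
    (a : ℝ) {B : Set ℝ} (hB : MeasurableSet B) {h : ℝ → ℝ → ℝ}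
    (hh : Measurable (Function.uncurry h)) {C : ℝ} (hh₁ : ∀ x, |h 1 x| ≤ C)
    (hh₂ : ∀ x, |h (-1) x| ≤ C) :
    ∫ ω in (fun ω => a * θ ω + Z ω) ⁻¹' B, h (θ ω) (a * θ ω + Z ω) ∂P
      = ∫ x in B, (p * (gaussianPDFReal a v x * h 1 x)
          + (1 - p) * (gaussianPDFReal (-a) v x * h (-1) x)) := by
  have hC : 0 ≤ C := (abs_nonneg _).trans (hh₁ 0)
  have hbdd (s x : ℝ) (hs : ∀ x, |h s x| ≤ C) : |B.indicator (h s) x| ≤ C := by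
    by_cases hx : x ∈ B <;> simp [hx, hs, hC]
  calc ∫ ω in (fun ω => a * θ ω + Z ω) ⁻¹' B, h (θ ω) (a * θ ω + Z ω) ∂P
      = ∫ ω, B.indicator (h (θ ω)) (a * θ ω + Z ω) ∂P := by
        rw [← integral_indicator ((by fun_prop : Measurable fun ω => a * θ ω + Z ω) hB)]
        rfl
    _ = ∫ x, (p * (gaussianPDFReal a v x * B.indicator (h 1) x)
          + (1 - p) * (gaussianPDFReal (-a) v x * B.indicator (h (-1)) x)) :=
        integral_comp_sign_drift (k := fun s => B.indicator (h s)) hθ hZ hθpm hθp hp₀ hindep hv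
          hZlaw a (hh.indicator (measurable_snd hB)) (hbdd 1 · hh₁) (hbdd (-1) · hh₂)
    _ = _ := by
        rw [← integral_indicator hB]
        congr with x
        by_cases hx : x ∈ B <;> simp [hx]

end SignIndependentOfGaussian

theorem condexp_drift (μ p t : ℝ) (hp : p ∈ Set.Ioo (0 : ℝ) 1)
    (ht : 0 < t) {Ω : Type*} [MeasurableSpace Ω] (P : Measure Ω) [IsProbabilityMeasure P]
    (θ Z : Ω → ℝ) (hθmeas : Measurable θ) (hZmeas : Measurable Z)
    (hθpm : ∀ ω, θ ω = 1 ∨ θ ω = -1) (hθp : P {ω | θ ω = 1} = ENNReal.ofReal p)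
    (hZlaw : Measure.map Z P = gaussianReal 0 (Real.toNNReal t))
    (hindep : IndepFun θ Z P) (X : Ω → ℝ) (hX : ∀ ω, X ω = μ * θ ω * t + Z ω) :
    P[θ | MeasurableSpace.comap X (borel ℝ)]
      =ᵐ[P] fun ω => 1 - 2 * (1 - p) / (p * Real.exp (2 * μ * X ω) + 1 - p) := by
  obtain ⟨hp₀, hp₁⟩ : 0 ≤ p ∧ p ≤ 1 := ⟨hp.1.le, hp.2.le⟩
  set g := signPosteriorMean p (2 * μ)
  change _ =ᵐ[P] fun ω => g (X ω)
  obtain rfl : X = fun ω => μ * t * θ ω + Z ω := funext fun ω => by rw [hX]; ring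
  have hXm : Measurable fun ω => μ * t * θ ω + Z ω := by fun_prop
  have hθint : Integrable θ P := .of_bound hθmeas.aestronglyMeasurable 1
    (ae_of_all _ fun ω => by rcases hθpm ω with h | h <;> simp [h])
  have hgX : Integrable (fun ω => g (μ * t * θ ω + Z ω)) P :=
    .of_bound ((measurable_signPosteriorMean _).comp hXm).aestronglyMeasurable 1
      (ae_of_all _ fun ω => abs_signPosteriorMean_le_one _ hp₀ hp₁ _)
  refine (ae_eq_condExp_of_forall_setIntegral_eq hXm.comap_le hθint
    (fun _ _ _ => hgX.integrableOn) ?_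
    ((measurable_signPosteriorMean _).comp (.of_comap_le le_rfl)).aestronglyMeasurable).symm
  rintro _ ⟨B, hB, rfl⟩ -
  have hv : t.toNNReal ≠ 0 := by simpa using ht
  have hgB := setIntegral_preimage_sign_drift (h := fun _ => g) hθmeas hZmeas hθpm hθp hp₀
    hindep hv hZlaw (μ * t) hB ((measurable_signPosteriorMean _).comp measurable_snd)
    (abs_signPosteriorMean_le_one _ hp₀ hp₁) (abs_signPosteriorMean_le_one _ hp₀ hp₁)
  have hθB := setIntegral_preimage_sign_drift (h := fun s _ => s) hθmeas hZmeas hθpm hθp hp₀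
    hindep hv hZlaw (μ * t) hB measurable_fst (C := 1) (by simp) (by simp)
  rw [hgB, hθB]
  refine setIntegral_congr_fun hB fun x _ => ?_
  linear_combination mixture_mul_signPosteriorMean hp₀ hp₁ ht μ x
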